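/- Let G be a finite simple connected bipartite graph on n ≥ 2 vertices whose normalized Laplacian 𝓛 has eigenvalues 0 = λ₀ < λ₁ ≤ … ≤ λ_{n−1} = 2, and for η ∈ [0,1) define g(η) = max_{i=1,…,n−1} |η + (1−η)(1 − λᵢ)|. Then the unique minimizer of g over [0,1) is η* = λ₁ / (2 + λ₁), which lies in (0,1). -/
import Mathlib


/-- Let `G` be a finite simple connected *bipartite* graph on `n ≥ 2`
vertices whose normalized Laplacian `𝓛 = I - D^{-1/2} A D^{-1/2}` has eigenvalues (listed
with multiplicity in increasing order, via a diagonalization)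
`0 = λ₀ < λ₁ ≤ … ≤ λ_{n-1} = 2`, and for `η ∈ [0,1)` let
`g(η) = max_{i=1,…,n-1} |η + (1-η)(1-λᵢ)|`. Then the unique minimizer of `g` over `[0,1)`
is `η* = λ₁/(2 + λ₁)`, which lies in `(0,1)`. -/
theorem stmt_11 {n : ℕ} (hn : 2 ≤ n) (G : SimpleGraph (Fin n)) [DecidableRel G.Adj]
    (hconn : G.Connected) (hbip : G.Colorable 2)
    (lam : Fin n → ℝ) (hmono : Monotone lam)
    (hlam0 : lam ⟨0, by omega⟩ = 0) (hlam1 : 0 < lam ⟨1, by omega⟩)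
    (hlamtop : lam ⟨n - 1, by omega⟩ = 2)
    (hdiag : ∃ P : Matrix (Fin n) (Fin n) ℝ, IsUnit P.det ∧
      ((1 : Matrix (Fin n) (Fin n) ℝ)
          - (Matrix.diagonal fun i => (Real.sqrt (G.degree i))⁻¹) * G.adjMatrix ℝ
              * (Matrix.diagonal fun i => (Real.sqrt (G.degree i))⁻¹)) * P
        = P * Matrix.diagonal lam)
    (g : ℝ → ℝ)
    (hg : ∀ η : ℝ, g η = Finset.sup' (Finset.univ.erase (⟨0, by omega⟩ : Fin n))
      ⟨⟨1, by omega⟩, by simp [Finset.mem_erase, Fin.ext_iff]⟩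
      fun i => |η + (1 - η) * (1 - lam i)|) :
    lam ⟨1, by omega⟩ / (2 + lam ⟨1, by omega⟩) ∈ Set.Ioo (0 : ℝ) 1
    ∧ (∀ η ∈ Set.Ico (0 : ℝ) 1, η ≠ lam ⟨1, by omega⟩ / (2 + lam ⟨1, by omega⟩) →
        g (lam ⟨1, by omega⟩ / (2 + lam ⟨1, by omega⟩)) < g η) := by

  set l := lam ⟨1, by omega⟩ with hl_def
  have hl : 0 < l := hlam1
  have hl2 : l ≤ 2 := by
    have := hmono (a := ⟨1, by omega⟩) (b := ⟨n - 1, by omega⟩) (by simp [Fin.le_def]; omega)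
    rw [hlamtop] at this; exact this
  have hpos : (0:ℝ) < 2 + l := by linarith
  have hstar_mem : l / (2 + l) ∈ Set.Ioo (0:ℝ) 1 := by
    constructor
    · exact div_pos hl hpos
    · rw [div_lt_one hpos]; linarith
  refine ⟨hstar_mem, ?_⟩
  intro η hη hne
  -- upper bound for g at η*
  have hbound : ∀ i : Fin n, i ∈ Finset.univ.erase (⟨0, by omega⟩ : Fin n) →
      |l / (2 + l) + (1 - l / (2 + l)) * (1 - lam i)| ≤ (2 - l) / (2 + l) := by
    intro i hi
    have hi0 : (i : ℕ) ≠ 0 := by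
      intro h
      exact (Finset.mem_erase.mp hi).1 (Fin.ext h)
    have hlow : l ≤ lam i := hmono (a := ⟨1, by omega⟩) (by simp [Fin.le_def]; omega)
    have hhigh : lam i ≤ 2 := by
      have := hmono (a := i) (b := ⟨n - 1, by omega⟩) (by simp [Fin.le_def]; omega)
      rw [hlamtop] at this; exact this
    rw [abs_le]
    constructor
    · rw [neg_le, ← sub_nonneg]
      have : (2 - l) / (2 + l) - -(l / (2 + l) + (1 - l / (2 + l)) * (1 - lam i))
          = (2 * (2 - lam i)) / (2 + l) := by field_simp; ring
      rw [this]
      exact div_nonneg (by linarith) hpos.le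
    · rw [← sub_nonneg]
      have : (2 - l) / (2 + l) - (l / (2 + l) + (1 - l / (2 + l)) * (1 - lam i))
          = (2 * (lam i - l)) / (2 + l) := by field_simp; ring
      rw [this]
      exact div_nonneg (by linarith) hpos.le
  have hgstar : g (l / (2 + l)) ≤ (2 - l) / (2 + l) := by
    rw [hg]; exact Finset.sup'_le _ _ hbound
  rcases lt_or_gt_of_ne hne with hlt | hgt
  · -- η < η* : use index n-1
    have hηs : η * (2 + l) < l := by
      rw [← lt_div_iff₀ hpos]; exact hlt
    have hmem : (⟨n - 1, by omega⟩ : Fin n) ∈ Finset.univ.erase (⟨0, by omega⟩ : Fin n) := by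
      simp [Finset.mem_erase, Fin.ext_iff]; omega
    have hge : |η + (1 - η) * (1 - lam ⟨n - 1, by omega⟩)| ≤ g η := by
      rw [hg]; exact Finset.le_sup' (f := fun i => |η + (1 - η) * (1 - lam i)|) hmem
    have hval : |η + (1 - η) * (1 - lam ⟨n - 1, by omega⟩)| = |2 * η - 1| := by
      rw [hlamtop]; ring_nf
    have habs : 1 - 2 * η ≤ |2 * η - 1| := by
      rw [abs_sub_comm]; exact le_abs_self _
    have hkey : (2 - l) / (2 + l) < 1 - 2 * η := by
      rw [div_lt_iff₀ hpos]; nlinarith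
    calc g (l / (2 + l)) ≤ (2 - l) / (2 + l) := hgstar
      _ < 1 - 2 * η := hkey
      _ ≤ |2 * η - 1| := habs
      _ = |η + (1 - η) * (1 - lam ⟨n - 1, by omega⟩)| := hval.symm
      _ ≤ g η := hge
  · -- η > η* : use index 1
    have hηs : l < η * (2 + l) := by
      rw [← div_lt_iff₀ hpos]; exact hgt
    have hmem : (⟨1, by omega⟩ : Fin n) ∈ Finset.univ.erase (⟨0, by omega⟩ : Fin n) := by
      simp [Finset.mem_erase, Fin.ext_iff]
    have hge : |η + (1 - η) * (1 - l)| ≤ g η := by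
      rw [hg]; exact Finset.le_sup' (f := fun i => |η + (1 - η) * (1 - lam i)|) hmem
    have habs : η + (1 - η) * (1 - l) ≤ |η + (1 - η) * (1 - l)| := le_abs_self _
    have hkey : (2 - l) / (2 + l) < η + (1 - η) * (1 - l) := by
      rw [div_lt_iff₀ hpos]; nlinarith [mul_pos hl (sub_pos.mpr hηs)]
    calc g (l / (2 + l)) ≤ (2 - l) / (2 + l) := hgstar
      _ < η + (1 - η) * (1 - l) := hkey
      _ ≤ |η + (1 - η) * (1 - l)| := habs
      _ ≤ g η := hge
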